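/- Let h, x : ℤ² → ℂ be finitely supported and let y = h ∗ x. Then for all nonzero z₁, z₂ ∈ ℂ, the z-transform of y satisfies Y(z₁,z₂) = Σ_{p∈{0,1}²} Σ_{q∈{0,1}²} z₁^{−p₁} z₂^{−p₂} G_{p,q}(z₁²,z₂²) X_q(z₁²,z₂²), where X_q is the z-transform of the polyphase component x_q and G_{p,q} is the z-transform of the filter g_{p,q} defined by g_{p,q}[m] = h[2m + p − q]. In particular the 4×4 polyphase matrix (G_{p,q}(z₁²,z₂²)) depends only on even powers of z₁ and z₂, i.e. its entries are built from filters supported on the subgrid 2ℤ². -/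

import Mathlib

open scoped BigOperators Pointwise

/-- Two-dimensional z-transform of a (finitely supported) signal `x : ℤ² → ℂ`:
`X(z₁,z₂) = Σ_{n∈ℤ²} x[n] z₁^{−n₁} z₂^{−n₂}`. -/
noncomputable def ztransform (x : ℤ × ℤ → ℂ) (z₁ z₂ : ℂ) : ℂ :=
  ∑ᶠ n : ℤ × ℤ, x n * z₁ ^ (-n.1) * z₂ ^ (-n.2)

/-- Convolution of signals on ℤ²: `(h∗x)[n] = Σ_{m∈ℤ²} h[m] x[n−m]`. -/
noncomputable def conv2 (h x : ℤ × ℤ → ℂ) : ℤ × ℤ → ℂ :=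
  fun n => ∑ᶠ m : ℤ × ℤ, h m * x (n - m)

/-- Polyphase component of `x` with phase `p ∈ {0,1}²`: `x_p[n] = x[2n + p]`. -/
def polyphase (x : ℤ × ℤ → ℂ) (p : ℤ × ℤ) : ℤ × ℤ → ℂ :=
  fun n => x (2 * n + p)

/-- The polyphase filters `g_{p,q}[m] = h[2m + p − q]`. -/
def polyFilter (h : ℤ × ℤ → ℂ) (p q : ℤ × ℤ) : ℤ × ℤ → ℂ :=
  fun m => h (2 * m + p - q)

/-- The set `{0,1}²` of phases. -/
def phases : Finset (ℤ × ℤ) := ({0, 1} : Finset ℤ) ×ˢ ({0, 1} : Finset ℤ)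

lemma mem_phases_iff {p : ℤ × ℤ} :
    p ∈ phases ↔ (p.1 = 0 ∨ p.1 = 1) ∧ (p.2 = 0 ∨ p.2 = 1) := by
  simp [phases]

/-- Key reindexing lemma: summing a finitely supported function over the four
cosets of `2ℤ²` (shifted by `c`) gives the total sum. -/
lemma sum_phases_shift (F : ℤ × ℤ → ℂ) (hF : (Function.support F).Finite) (c : ℤ × ℤ) :
    ∑ p ∈ phases, ∑ᶠ m : ℤ × ℤ, F (2 * m + p + c) = ∑ᶠ k, F k := by
  classical
  set T : Finset (ℤ × ℤ) := hF.toFinset with hT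
  have hmemT : ∀ k, F k ≠ 0 → k ∈ T := fun k hk => hF.mem_toFinset.2 hk
  have hinj : ∀ p : ℤ × ℤ, Function.Injective (fun m : ℤ × ℤ => 2 * m + p + c) := by
    intro p m m' hmm
    have h1 : 2 * m.1 + p.1 + c.1 = 2 * m'.1 + p.1 + c.1 := congrArg Prod.fst hmm
    have h2 : 2 * m.2 + p.2 + c.2 = 2 * m'.2 + p.2 + c.2 := congrArg Prod.snd hmm
    exact Prod.ext (by omega) (by omega)
  set S : ℤ × ℤ → Finset (ℤ × ℤ) :=
    fun p => T.preimage (fun m => 2 * m + p + c) ((hinj p).injOn) with hS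
  have step1 : ∀ p, (∑ᶠ m : ℤ × ℤ, F (2 * m + p + c)) = ∑ m ∈ S p, F (2 * m + p + c) := by
    intro p
    refine finsum_eq_sum_of_support_subset _ ?_
    intro m hm
    simp only [Function.mem_support] at hm
    simp only [hS, Finset.coe_preimage, Set.mem_preimage, Finset.mem_coe]
    exact hmemT _ hm
  calc ∑ p ∈ phases, ∑ᶠ m : ℤ × ℤ, F (2 * m + p + c)
      = ∑ p ∈ phases, ∑ m ∈ S p, F (2 * m + p + c) := by
        exact Finset.sum_congr rfl fun p _ => step1 p
    _ = ∑ x ∈ phases.sigma S, F (2 * x.2 + x.1 + c) := Finset.sum_sigma' _ _ _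
    _ = ∑ k ∈ T, F k := by
        refine Finset.sum_nbij' (fun x => 2 * x.2 + x.1 + c)
          (fun k => ⟨((k.1 - c.1) % 2, (k.2 - c.2) % 2), ((k.1 - c.1) / 2, (k.2 - c.2) / 2)⟩)
          ?_ ?_ ?_ ?_ ?_
        · rintro ⟨p, m⟩ hx
          rw [Finset.mem_sigma] at hx
          have := hx.2
          simpa [hS, Finset.mem_preimage] using this
        · intro k hk
          rw [Finset.mem_sigma]
          refine ⟨mem_phases_iff.2 ⟨?_, ?_⟩, ?_⟩
          · show (k.1 - c.1) % 2 = 0 ∨ (k.1 - c.1) % 2 = 1; omega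
          · show (k.2 - c.2) % 2 = 0 ∨ (k.2 - c.2) % 2 = 1; omega
          · simp only [hS, Finset.mem_preimage]
            have heq : (2 * (((k.1 - c.1) / 2, (k.2 - c.2) / 2) : ℤ × ℤ)
                + ((k.1 - c.1) % 2, (k.2 - c.2) % 2) + c) = k := by
              refine Prod.ext ?_ ?_ <;> simp <;> omega
            show (2 * (((k.1 - c.1) / 2, (k.2 - c.2) / 2) : ℤ × ℤ)
                + ((k.1 - c.1) % 2, (k.2 - c.2) % 2) + c) ∈ T
            rw [heq]; exact hk
        · rintro ⟨p, m⟩ hx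
          rw [Finset.mem_sigma] at hx
          obtain ⟨hp1, hp2⟩ := mem_phases_iff.1 hx.1
          dsimp only at hp1 hp2
          have e1 : (2 * m + p + c).1 - c.1 = 2 * m.1 + p.1 := by simp
          have e2 : (2 * m + p + c).2 - c.2 = 2 * m.2 + p.2 := by simp
          have hpp : ((((2 * m + p + c).1 - c.1) % 2, ((2 * m + p + c).2 - c.2) % 2) : ℤ × ℤ)
              = p := by
            refine Prod.ext ?_ ?_ <;> simp only [e1, e2] <;> omega
          have hmm : ((((2 * m + p + c).1 - c.1) / 2, ((2 * m + p + c).2 - c.2) / 2) : ℤ × ℤ)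
              = m := by
            refine Prod.ext ?_ ?_ <;> simp only [e1, e2] <;> omega
          show (⟨(((2 * m + p + c).1 - c.1) % 2, ((2 * m + p + c).2 - c.2) % 2),
              (((2 * m + p + c).1 - c.1) / 2, ((2 * m + p + c).2 - c.2) / 2)⟩
              : Σ _ : ℤ × ℤ, ℤ × ℤ) = ⟨p, m⟩
          rw [hpp, hmm]
        · intro k hk
          show 2 * (((k.1 - c.1) / 2, (k.2 - c.2) / 2) : ℤ × ℤ)
              + ((k.1 - c.1) % 2, (k.2 - c.2) % 2) + c = k
          refine Prod.ext ?_ ?_ <;> simp <;> omega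
        · rintro ⟨p, m⟩ _; rfl
    _ = ∑ᶠ k, F k := by
        refine (finsum_eq_sum_of_support_subset _ ?_).symm
        intro k hk
        exact hmemT _ hk

lemma zpow_sq_neg {z : ℂ} (n : ℤ) : (z ^ 2) ^ (-n) = z ^ (-(2 * n)) := by
  rw [show (z ^ 2) = z ^ (2 : ℤ) by norm_cast, ← zpow_mul]
  ring_nf

/-- Polyphase representation of the z-transform of a convolution `y = h ∗ x`:
`Y(z₁,z₂) = Σ_{p,q∈{0,1}²} z₁^{−p₁} z₂^{−p₂} G_{p,q}(z₁²,z₂²) X_q(z₁²,z₂²)`,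
where the polyphase matrix entries `G_{p,q}` are evaluated only at even powers
`(z₁², z₂²)`, i.e. they come from filters living on the subgrid `2ℤ²`. -/
theorem ztransform_conv2_polyphase (h x : ℤ × ℤ → ℂ)
    (hh : (Function.support h).Finite) (hx : (Function.support x).Finite)
    (y : ℤ × ℤ → ℂ) (hy : y = conv2 h x)
    (z₁ z₂ : ℂ) (hz₁ : z₁ ≠ 0) (hz₂ : z₂ ≠ 0) :
    ztransform y z₁ z₂ =
      ∑ p ∈ phases, ∑ q ∈ phases,
        z₁ ^ (-p.1) * z₂ ^ (-p.2)
          * ztransform (polyFilter h p q) (z₁ ^ 2) (z₂ ^ 2)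
          * ztransform (polyphase x q) (z₁ ^ 2) (z₂ ^ 2) := by
  classical
  subst hy
  -- notation
  set Z : ℤ × ℤ → ℂ := fun n => z₁ ^ (-n.1) * z₂ ^ (-n.2) with hZ
  have hZne : ∀ n, Z n ≠ 0 := fun n =>
    mul_ne_zero (zpow_ne_zero _ hz₁) (zpow_ne_zero _ hz₂)
  have hZadd : ∀ a b : ℤ × ℤ, Z (a + b) = Z a * Z b := by
    intro a b
    simp only [hZ, Prod.fst_add, Prod.snd_add, neg_add, zpow_add₀ hz₁, zpow_add₀ hz₂]
    ring
  have hZ2 : ∀ m : ℤ × ℤ, (z₁ ^ 2) ^ (-m.1) * (z₂ ^ 2) ^ (-m.2) = Z (2 * m) := by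
    intro m
    simp only [hZ, zpow_sq_neg, Prod.fst_mul, Prod.snd_mul]
    norm_num
  -- finsets
  set A : Finset (ℤ × ℤ) := hh.toFinset with hA
  set B : Finset (ℤ × ℤ) := hx.toFinset with hB
  have hmemA : ∀ k, h k ≠ 0 → k ∈ A := fun k hk => hh.mem_toFinset.2 hk
  have hmemB : ∀ k, x k ≠ 0 → k ∈ B := fun k hk => hx.mem_toFinset.2 hk
  -- the z-transforms as finite sums
  have hH : ztransform h z₁ z₂ = ∑ m ∈ A, h m * Z m := by
    rw [ztransform]
    refine finsum_eq_sum_of_support_subset _ ?_ |>.trans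
      (Finset.sum_congr rfl fun m _ => by rw [hZ]; ring)
    intro k hk
    simp only [Function.mem_support] at hk
    have : h k ≠ 0 := fun h0 => hk (by simp [h0])
    exact hmemA _ this
  have hX : ztransform x z₁ z₂ = ∑ k ∈ B, x k * Z k := by
    rw [ztransform]
    refine finsum_eq_sum_of_support_subset _ ?_ |>.trans
      (Finset.sum_congr rfl fun m _ => by rw [hZ]; ring)
    intro k hk
    simp only [Function.mem_support] at hk
    have : x k ≠ 0 := fun h0 => hk (by simp [h0])
    exact hmemB _ this
  -- Step 1: z-transform of the convolution is the product of z-transforms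
  have conv_eq : ztransform (conv2 h x) z₁ z₂ = ztransform h z₁ z₂ * ztransform x z₁ z₂ := by
    have hc : ∀ n, conv2 h x n = ∑ m ∈ A, h m * x (n - m) := by
      intro n
      rw [conv2]
      refine finsum_eq_sum_of_support_subset _ ?_
      intro m hm
      simp only [Function.mem_support] at hm
      have : h m ≠ 0 := fun h0 => hm (by simp [h0])
      exact hmemA _ this
    rw [ztransform]
    have hsupp : Function.support (fun n : ℤ × ℤ => conv2 h x n * z₁ ^ (-n.1) * z₂ ^ (-n.2))
        ⊆ ↑(A + B) := by
      intro n hn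
      simp only [Function.mem_support] at hn
      have hcn : conv2 h x n ≠ 0 := fun h0 => hn (by simp [h0])
      rw [hc] at hcn
      obtain ⟨m, hmA, hm0⟩ := Finset.exists_ne_zero_of_sum_ne_zero hcn
      have hxnm : x (n - m) ≠ 0 := fun h0 => hm0 (by simp [h0])
      have : n = m + (n - m) := by ring
      rw [Finset.mem_coe, this]
      exact Finset.add_mem_add hmA (hmemB _ hxnm)
    rw [finsum_eq_sum_of_support_subset _ hsupp]
    have : ∑ n ∈ A + B, conv2 h x n * z₁ ^ (-n.1) * z₂ ^ (-n.2)
        = ∑ m ∈ A, ∑ n ∈ A + B, h m * x (n - m) * Z n := by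
      rw [Finset.sum_comm]
      refine Finset.sum_congr rfl fun n _ => ?_
      rw [hc, Finset.sum_mul, Finset.sum_mul]
      refine Finset.sum_congr rfl fun m _ => by rw [hZ]; ring
    rw [this]
    have inner : ∀ m ∈ A, ∑ n ∈ A + B, h m * x (n - m) * Z n
        = ∑ k ∈ B, h m * x k * Z (m + k) := by
      intro m hmA
      have himg : B.image (fun k => m + k) ⊆ A + B := by
        intro n hn
        obtain ⟨k, hkB, rfl⟩ := Finset.mem_image.1 hn
        exact Finset.add_mem_add hmA hkB
      rw [← Finset.sum_subset himg ?_]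
      · rw [Finset.sum_image (fun a _ b _ hab => by
          have := congrArg (fun t : ℤ × ℤ => t - m) hab
          simpa using this)]
        refine Finset.sum_congr rfl fun k _ => ?_
        congr 1
        simp
      · intro n _ hn
        have : x (n - m) = 0 := by
          by_contra hx0
          exact hn (Finset.mem_image.2 ⟨n - m, hmemB _ hx0, by ring⟩)
        simp [this]
    rw [Finset.sum_congr rfl inner, hH, hX, Finset.sum_mul_sum]
    refine Finset.sum_congr rfl fun m _ => Finset.sum_congr rfl fun k _ => ?_
    rw [hZadd]; ring
  rw [conv_eq]
  -- Step 2: the polyphase sum for x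
  have hFx : (Function.support (fun k => x k * Z k)).Finite := by
    refine hx.subset ?_
    intro k hk
    simp only [Function.mem_support] at hk ⊢
    exact fun h0 => hk (by simp [h0])
  have polyx : ∀ q ∈ phases,
      Z q * ztransform (polyphase x q) (z₁ ^ 2) (z₂ ^ 2)
        = ∑ᶠ n : ℤ × ℤ, (fun k => x k * Z k) (2 * n + q + 0) := by
    intro q _
    rw [ztransform]
    have hsupp : (Function.support
        (fun n : ℤ × ℤ => polyphase x q n * (z₁ ^ 2) ^ (-n.1) * (z₂ ^ 2) ^ (-n.2))).Finite := by
      have hinj : Function.Injective (fun n : ℤ × ℤ => 2 * n + q) := by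
        intro m m' hmm
        have h1 : 2 * m.1 + q.1 = 2 * m'.1 + q.1 := congrArg Prod.fst hmm
        have h2 : 2 * m.2 + q.2 = 2 * m'.2 + q.2 := congrArg Prod.snd hmm
        exact Prod.ext (by omega) (by omega)
      refine Set.Finite.subset (Set.Finite.preimage hinj.injOn hx) ?_
      intro n hn
      simp only [Function.mem_support] at hn
      simp only [Set.mem_preimage, Function.mem_support]
      intro h0
      exact hn (by simp [polyphase, h0])
    rw [mul_finsum _ _]
    refine finsum_congr fun n => ?_
    simp only [polyphase, add_zero]
    calc Z q * (x (2 * n + q) * (z₁ ^ 2) ^ (-n.1) * (z₂ ^ 2) ^ (-n.2))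
        = x (2 * n + q) * (Z q * ((z₁ ^ 2) ^ (-n.1) * (z₂ ^ 2) ^ (-n.2))) := by ring
      _ = x (2 * n + q) * (Z q * Z (2 * n)) := by rw [hZ2]
      _ = x (2 * n + q) * Z (q + 2 * n) := by rw [hZadd]
      _ = x (2 * n + q) * Z (2 * n + q) := by rw [add_comm q (2 * n)]
  -- Step 3: the polyphase matrix column sum for h
  have polyh : ∀ q ∈ phases,
      ∑ p ∈ phases, Z p * ztransform (polyFilter h p q) (z₁ ^ 2) (z₂ ^ 2)
        = Z q * ztransform h z₁ z₂ := by
    intro q _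
    have hFh : (Function.support (fun k => h k * Z k)).Finite := by
      refine hh.subset ?_
      intro k hk
      simp only [Function.mem_support] at hk ⊢
      exact fun h0 => hk (by simp [h0])
    have step : ∀ p ∈ phases,
        Z p * ztransform (polyFilter h p q) (z₁ ^ 2) (z₂ ^ 2)
          = Z q * ∑ᶠ m : ℤ × ℤ, (fun k => h k * Z k) (2 * m + p + (-q)) := by
      intro p _
      rw [ztransform]
      have hinj : Function.Injective (fun n : ℤ × ℤ => 2 * n + p - q) := by
        intro m m' hmm
        have h1 : 2 * m.1 + p.1 - q.1 = 2 * m'.1 + p.1 - q.1 := congrArg Prod.fst hmm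
        have h2 : 2 * m.2 + p.2 - q.2 = 2 * m'.2 + p.2 - q.2 := congrArg Prod.snd hmm
        exact Prod.ext (by omega) (by omega)
      have hsupp : (Function.support
          (fun m : ℤ × ℤ => polyFilter h p q m * (z₁ ^ 2) ^ (-m.1) * (z₂ ^ 2) ^ (-m.2))).Finite := by
        refine Set.Finite.subset (Set.Finite.preimage hinj.injOn hh) ?_
        intro m hm
        simp only [Function.mem_support] at hm
        simp only [Set.mem_preimage, Function.mem_support]
        intro h0
        exact hm (by simp [polyFilter, h0])
      have hsupp2 : (Function.support
          (fun m : ℤ × ℤ => (fun k => h k * Z k) (2 * m + p + (-q)))).Finite := by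
        have hinj2 : Function.Injective (fun n : ℤ × ℤ => 2 * n + p + (-q)) := by
          intro m m' hmm
          have h1 : 2 * m.1 + p.1 + (-q.1) = 2 * m'.1 + p.1 + (-q.1) := congrArg Prod.fst hmm
          have h2 : 2 * m.2 + p.2 + (-q.2) = 2 * m'.2 + p.2 + (-q.2) := congrArg Prod.snd hmm
          exact Prod.ext (by omega) (by omega)
        refine Set.Finite.subset
          (Set.Finite.preimage (f := fun n : ℤ × ℤ => 2 * n + p + (-q)) hinj2.injOn hFh)
          (fun m hm => hm)
      rw [mul_finsum _ _, mul_finsum _ _]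
      refine finsum_congr fun m => ?_
      simp only [polyFilter]
      have key1 : Z p * Z (2 * m) = Z q * Z (2 * m + p + (-q)) := by
        rw [← hZadd, ← hZadd]
        congr 1
        ring
      have hms : 2 * m + p + (-q) = 2 * m + p - q := by ring
      rw [hms] at key1
      rw [hms]
      calc Z p * (h (2 * m + p - q) * (z₁ ^ 2) ^ (-m.1) * (z₂ ^ 2) ^ (-m.2))
          = h (2 * m + p - q) * (Z p * ((z₁ ^ 2) ^ (-m.1) * (z₂ ^ 2) ^ (-m.2))) := by ring
        _ = h (2 * m + p - q) * (Z p * Z (2 * m)) := by rw [hZ2]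
        _ = h (2 * m + p - q) * (Z q * Z (2 * m + p - q)) := by rw [key1]
        _ = Z q * (h (2 * m + p - q) * Z (2 * m + p - q)) := by ring
    rw [Finset.sum_congr rfl step, ← Finset.mul_sum,
      sum_phases_shift _ hFh (-q)]
    congr 1
    rw [ztransform]
    refine finsum_congr fun k => by rw [hZ]; ring
  -- Assemble
  have rhs_eq : ∑ p ∈ phases, ∑ q ∈ phases,
      z₁ ^ (-p.1) * z₂ ^ (-p.2)
        * ztransform (polyFilter h p q) (z₁ ^ 2) (z₂ ^ 2)
        * ztransform (polyphase x q) (z₁ ^ 2) (z₂ ^ 2)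
      = ∑ q ∈ phases, (∑ p ∈ phases, Z p * ztransform (polyFilter h p q) (z₁ ^ 2) (z₂ ^ 2))
          * ztransform (polyphase x q) (z₁ ^ 2) (z₂ ^ 2) := by
    rw [Finset.sum_comm]
    refine Finset.sum_congr rfl fun q _ => ?_
    rw [Finset.sum_mul]
  rw [rhs_eq]
  have : ∑ q ∈ phases, (∑ p ∈ phases, Z p * ztransform (polyFilter h p q) (z₁ ^ 2) (z₂ ^ 2))
          * ztransform (polyphase x q) (z₁ ^ 2) (z₂ ^ 2)
      = ztransform h z₁ z₂ * ∑ q ∈ phases, Z q * ztransform (polyphase x q) (z₁ ^ 2) (z₂ ^ 2) := by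
    rw [Finset.mul_sum]
    refine Finset.sum_congr rfl fun q hq => ?_
    rw [polyh q hq]
    ring
  rw [this]
  congr 1
  rw [Finset.sum_congr rfl polyx, sum_phases_shift _ hFx 0, ztransform]
  refine (finsum_congr fun k => by rw [hZ]; ring).symm
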